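/- Let n ≥ 1, S = ℚ[x_1,…,x_n], and let D_n ⊆ Der_ℚ(S) be the module of logarithmic derivations of the essential braid arrangement. Then the derivations θ_k = ∑_{i=1}^{n} x_i^k ∂/∂x_i for k = 1, …, n (i.e., the derivations determined by θ_k(x_i) = x_i^k) belong to D_n and form an S-basis of D_n; in particular D_n is a free S-module of rank n with homogeneous generators in degrees 1, 2, …, n, so the essential braid arrangement A_n ⊆ ℚ^n is free with exponents {1, 2, …, n}. -/

import Mathlib

/-!
Saito's criterion, made explicit. The coefficient matrix `M = (x_i ^ k)` of `θ_1, …, θ_n` has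
the Vandermonde determinant of `y = (0, x_1, …, x_n)`, i.e. the product of the defining forms
`y_b - y_a` of the arrangement, which are pairwise non-associated irreducibles. For `θ ∈ D_n`,
Cramer's rule gives the coefficients of `θ` in the `θ_k` as `det M_k / det M`, where every column
of `M_k` is logarithmic; a row operation shows that each defining form divides `det M_k`, hence
so does `det M`. Independence is `det M ≠ 0`.
-/

open MvPolynomial

/-- The ring `S = ℚ[x_1,…,x_n]`. -/
abbrev S (n : ℕ) : Type := MvPolynomial (Fin n) ℚ

/-- The module `D_n = D(A_n)` of logarithmic derivations of the essential braid
arrangement `A_n = {x_i = 0} ∪ {x_i = x_j} ⊆ ℚ^n`: derivations `θ` with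
`θ(x_i) ∈ ⟨x_i⟩` for `1 ≤ i ≤ n` and `θ(x_i - x_j) ∈ ⟨x_i - x_j⟩` for
`1 ≤ i < j ≤ n`. -/
noncomputable def braidDer (n : ℕ) : Submodule (S n) (Derivation ℚ (S n) (S n)) where
  carrier := {θ | (∀ i : Fin n, X i ∣ θ (X i)) ∧
    ∀ i j : Fin n, i < j → (X i - X j) ∣ θ (X i - X j)}
  add_mem' := by
    rintro a b ⟨ha1, ha2⟩ ⟨hb1, hb2⟩
    exact ⟨fun i => dvd_add (ha1 i) (hb1 i), fun i j hij => dvd_add (ha2 i j hij) (hb2 i j hij)⟩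
  zero_mem' := by
    refine ⟨fun i => ?_, fun i j _ => ?_⟩ <;> simp
  smul_mem' := by
    rintro c θ ⟨h1, h2⟩
    refine ⟨fun i => ?_, fun i j hij => ?_⟩
    · simpa [smul_eq_mul] using (h1 i).mul_left c
    · simpa [smul_eq_mul] using (h2 i j hij).mul_left c

/-- The derivation `θ_k = ∑_{i=1}^n x_i^k ∂/∂x_i`, i.e. the derivation determined by
`θ_k(x_i) = x_i^k`; here `k : Fin n` encodes the exponent `k + 1 ∈ {1, …, n}`. -/
noncomputable def powerDer (n : ℕ) (k : Fin n) : Derivation ℚ (S n) (S n) :=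
  mkDerivation ℚ (fun i : Fin n => X i ^ ((k : ℕ) + 1))

open Matrix Finset

namespace Matrix

variable {R m : Type*} [CommRing R] [Fintype m] [DecidableEq m]

theorem dvd_det_of_forall_dvd_row (A : Matrix m m R) (r : m) {d : R} (h : ∀ c, d ∣ A r c) :
    d ∣ A.det := by
  choose v hv using h
  rw [← A.updateRow_eq_self r, show A r = d • v from funext hv, det_updateRow_smul]
  exact dvd_mul_right _ _

theorem dvd_det_of_forall_dvd_sub_row (A : Matrix m m R) {i j : m} (hij : i ≠ j) {d : R}
    (h : ∀ c, d ∣ A i c - A j c) : d ∣ A.det := by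
  rw [← det_updateRow_add_smul_self A hij (-1)]
  refine dvd_det_of_forall_dvd_row _ i fun c => ?_
  simpa [sub_eq_add_neg] using h c

theorem exists_mulVec_eq_of_det_dvd_cramer [IsDomain R] {A : Matrix m m R} (hA : A.det ≠ 0)
    {b : m → R} (h : ∀ k, A.det ∣ A.cramer b k) : ∃ c, A *ᵥ c = b := by
  choose c hc using h
  refine ⟨c, funext fun i => mul_left_cancel₀ hA ?_⟩
  have := congrFun (A.mulVec_cramer b) i
  rw [show A.cramer b = A.det • c from funext hc, mulVec_smul] at this
  simpa using this

end Matrix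

theorem MvPolynomial.irreducible_X_sub_X {σ K : Type*} [Field K] {i j : σ} (hij : i ≠ j) :
    Irreducible (X i - X j : MvPolynomial σ K) := by
  classical
  have hcoeff : (X i - X j : MvPolynomial σ K).coeff (Finsupp.single i 1) = 1 := by
    simp [coeff_X, Finsupp.single_left_inj, hij.symm]
  refine irreducible_of_totalDegree_eq_one (le_antisymm ?_ ?_) fun x hx => ?_
  · exact (totalDegree_sub _ _).trans (by simp)
  · simpa using le_totalDegree (s := Finsupp.single i 1) (by simp [hcoeff])
  · exact isUnit_of_dvd_one (hcoeff ▸ hx _)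

section BraidArrangement

variable {n : ℕ}

/-- The coordinates `y = (0, x_1, …, x_n)` of `ℚ^{n+1}`: the hyperplanes of the essential braid
arrangement are exactly the `y_a = y_b` with `a < b`. -/
noncomputable def extendedX (n : ℕ) : Fin (n + 1) → S n := Fin.cons 0 X

theorem eval_extendedX (f : Fin (n + 1) → ℚ) (a : Fin (n + 1)) :
    eval (fun i => f i.succ - f 0) (extendedX n a) = f a - f 0 := by
  cases a using Fin.cases <;> simp [extendedX]

theorem irreducible_extendedX_sub {a b : Fin (n + 1)} (hab : a < b) :
    Irreducible (extendedX n b - extendedX n a) := by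
  cases b using Fin.cases with
  | zero => exact absurd hab (Fin.not_lt_zero a)
  | succ j =>
    cases a using Fin.cases with
    | zero => simpa [extendedX] using (X_prime (i := j)).irreducible
    | succ i => simpa [extendedX] using irreducible_X_sub_X (Fin.succ_lt_succ_iff.1 hab).ne'

theorem extendedX_sub_not_dvd {a b c d : Fin (n + 1)} (hab : a < b) (hcd : c < d)
    (hne : (a, b) ≠ (c, d)) :
    ¬ extendedX n b - extendedX n a ∣ extendedX n d - extendedX n c := by
  obtain ⟨e, hecd, hea, heb⟩ : ∃ e, (e = c ∨ e = d) ∧ e ≠ a ∧ e ≠ b := by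
    by_contra! h
    have := h c (.inl rfl)
    have := h d (.inr rfl)
    grind
  rintro ⟨q, hq⟩
  set f : Fin (n + 1) → ℚ := Pi.single e 1 with hf
  have := congrArg (eval fun i => f i.succ - f 0) hq
  simp only [map_sub, map_mul, eval_extendedX, sub_sub_sub_cancel_right] at this
  rcases hecd with rfl | rfl <;> simp [hf, hea, heb, hcd.ne, hcd.ne'] at this

end BraidArrangement

noncomputable def powerMatrix (n : ℕ) : Matrix (Fin n) (Fin n) (S n) :=
  of fun i k => X i ^ ((k : ℕ) + 1)

theorem det_powerMatrix (n : ℕ) : (powerMatrix n).det = (vandermonde (extendedX n)).det := by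
  -- expand along the row of the node `0`, which is `(1, 0, …, 0)`
  rw [det_succ_row_zero, Fin.sum_univ_succ]
  simp [vandermonde_apply, extendedX, powerMatrix, submatrix]

theorem det_powerMatrix_ne_zero (n : ℕ) : (powerMatrix n).det ≠ 0 := by
  rw [det_powerMatrix, det_vandermonde]
  exact prod_ne_zero_iff.2 fun a _ => prod_ne_zero_iff.2 fun b hb =>
    (irreducible_extendedX_sub (mem_Ioi.1 hb)).ne_zero

section Logarithmic

variable {n : ℕ}

def IsLogarithmic (p : Fin n → S n) : Prop :=
  (∀ i, X i ∣ p i) ∧ ∀ i j, i < j → X i - X j ∣ p i - p j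

theorem mem_braidDer_iff {θ : Derivation ℚ (S n) (S n)} :
    θ ∈ braidDer n ↔ IsLogarithmic fun i => θ (X i) := by
  simp only [braidDer, IsLogarithmic, Derivation.map_sub]
  rfl

theorem isLogarithmic_pow (k : ℕ) : IsLogarithmic fun i : Fin n => (X i : S n) ^ (k + 1) :=
  ⟨fun _ => dvd_pow_self _ k.succ_ne_zero, fun _ _ _ => sub_dvd_pow_sub_pow _ _ _⟩

theorem extendedX_sub_dvd_det {A : Matrix (Fin n) (Fin n) (S n)}
    (hA : ∀ c, IsLogarithmic fun i => A i c) {a b : Fin (n + 1)} (hab : a < b) :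
    extendedX n b - extendedX n a ∣ A.det := by
  cases b using Fin.cases with
  | zero => exact absurd hab (Fin.not_lt_zero a)
  | succ j =>
    cases a using Fin.cases with
    | zero => simpa [extendedX] using A.dvd_det_of_forall_dvd_row j fun c => (hA c).1 j
    | succ i =>
      have hij : i < j := Fin.succ_lt_succ_iff.1 hab
      have hrows : ∀ c, X j - X i ∣ A j c - A i c := fun c => by
        rw [← neg_sub, neg_dvd, dvd_sub_comm]
        exact (hA c).2 i j hij
      simpa [extendedX] using A.dvd_det_of_forall_dvd_sub_row hij.ne' hrows

theorem det_powerMatrix_dvd_det {A : Matrix (Fin n) (Fin n) (S n)}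
    (hA : ∀ c, IsLogarithmic fun i => A i c) : (powerMatrix n).det ∣ A.det := by
  rw [det_powerMatrix, det_vandermonde, prod_sigma']
  refine prod_dvd_of_isRelPrime ?_ fun x hx =>
    extendedX_sub_dvd_det hA (mem_Ioi.1 (mem_sigma.1 hx).2)
  rintro ⟨a, b⟩ hab ⟨c, d⟩ hcd hne
  simp only [coe_sigma, Set.mem_sigma_iff, mem_coe, mem_univ, mem_Ioi, true_and] at hab hcd
  refine (irreducible_extendedX_sub hab).isRelPrime_iff_not_dvd.2 (extendedX_sub_not_dvd hab hcd ?_)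
  rintro ⟨⟩
  exact hne rfl

theorem exists_powerMatrix_mulVec_eq {p : Fin n → S n} (hp : IsLogarithmic p) :
    ∃ c, powerMatrix n *ᵥ c = p := by
  refine exists_mulVec_eq_of_det_dvd_cramer (det_powerMatrix_ne_zero n) fun k => ?_
  rw [cramer_apply]
  refine det_powerMatrix_dvd_det fun c => ?_
  by_cases hc : c = k
  · simpa [updateCol_apply, hc] using hp
  · simpa [updateCol_apply, hc, powerMatrix] using isLogarithmic_pow c

end Logarithmic

section PowerDer

variable {n : ℕ}

theorem powerDer_X (k i : Fin n) : powerDer n k (X i) = X i ^ ((k : ℕ) + 1) :=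
  mkDerivation_X ℚ _ i

theorem powerDer_mem_braidDer (k : Fin n) : powerDer n k ∈ braidDer n := by
  simpa only [mem_braidDer_iff, powerDer_X] using isLogarithmic_pow (n := n) k

theorem sum_smul_powerDer_X (c : Fin n → S n) (i : Fin n) :
    (∑ k, c k • powerDer n k) (X i) = (powerMatrix n *ᵥ c) i := by
  rw [← Derivation.coeFnAddMonoidHom_apply, map_sum, Finset.sum_apply]
  simp [powerDer_X, mulVec, dotProduct, powerMatrix, mul_comm]

theorem linearIndependent_powerDer : LinearIndependent (S n) (powerDer n) := by
  refine Fintype.linearIndependent_iff.2 fun c hc => ?_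
  refine congrFun (eq_zero_of_mulVec_eq_zero (det_powerMatrix_ne_zero n) (funext fun i => ?_))
  rw [← sum_smul_powerDer_X, hc]
  rfl

theorem exists_eq_sum_smul_powerDer {θ : Derivation ℚ (S n) (S n)} (hθ : θ ∈ braidDer n) :
    ∃ c : Fin n → S n, ∑ k, c k • powerDer n k = θ := by
  obtain ⟨c, hc⟩ := exists_powerMatrix_mulVec_eq (mem_braidDer_iff.1 hθ)
  exact ⟨c, derivation_ext fun i => by rw [sum_smul_powerDer_X, hc]⟩

end PowerDer

theorem braid_derivations_basis (n : ℕ) :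
    (∀ k : Fin n, powerDer n k ∈ braidDer n) ∧
      ∃ b : Module.Basis (Fin n) (S n) (braidDer n),
        ∀ k : Fin n, (b k : Derivation ℚ (S n) (S n)) = powerDer n k := by
  let v : Fin n → braidDer n := fun k => ⟨powerDer n k, powerDer_mem_braidDer k⟩
  have hli : LinearIndependent (S n) v :=
    LinearIndependent.of_comp (braidDer n).subtype linearIndependent_powerDer
  have hsp : ⊤ ≤ Submodule.span (S n) (Set.range v) := by
    rintro ⟨θ, hθ⟩ -
    obtain ⟨c, hc⟩ := exists_eq_sum_smul_powerDer hθ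
    exact (Submodule.mem_span_range_iff_exists_fun _).2 ⟨c, Subtype.ext (by simpa [v] using hc)⟩
  exact ⟨powerDer_mem_braidDer, Module.Basis.mk hli hsp, fun k => by rw [Module.Basis.mk_apply]⟩
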